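/- Let Σ={c,r} with the OPM M given by c⋖c and c≐r (together with the standard relations #⋖c, #⋖r, c⋗#, r⋗#), and let K be the semiring of all finite languages over the two-letter alphabet {a,b}, with union as addition, concatenation as multiplication, ∅ as zero and {ε} as one. Define the series S:(Σ,M)^+→K by S(c^n r)={a^n b a^n} for every n≥1 and S(w)=∅ for all other w. Then S is regular (recognized by some wOPA over (Σ,M) and K) but not strictly regular (not recognized by any rwOPA over (Σ,M) and K). -/

import Mathlib

namespace WOP

/-- Precedence relations: yields precedence, equal in precedence, takes precedence. -/
inductive PrecRel where
  | lt | eq | gt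
deriving DecidableEq

/-- An operator precedence matrix on `Σ ∪ {#}`, where `none` encodes `#`.
It assigns at most one precedence relation to each ordered pair, with
`# ⋖ a` and `a ⋗ #` for every letter `a`. -/
structure OPM (A : Type) where
  rel : Option A → Option A → Option PrecRel
  hash_lt : ∀ a : A, rel none (some a) = some .lt
  hash_gt : ∀ a : A, rel (some a) none = some .gt

variable {A B K : Type}

/-- The letter of `#w#` at position `i` (positions `0` and `> |w|` carry `#`, i.e. `none`). -/
def letterAt (w : List A) (i : ℕ) : Option A :=
  if i = 0 then none else w[i - 1]?

section ChainRel

variable (M : OPM A) (L : ℕ → Option A)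

mutual
  /-- `ChainMid M L k j`: there are `k = k_s < ... < k_m = j` with
  `L k_s ≐ L k_{s+1} ≐ ... ≐ L k_{m-1} ⋗ L k_m` and the gap condition between
  consecutive elements. -/
  inductive ChainMid : ℕ → ℕ → Prop where
    | last {k j : ℕ} : M.rel (L k) (L j) = some .gt → ChainGap k j → ChainMid k j
    | step {k k' j : ℕ} : M.rel (L k) (L k') = some .eq → ChainGap k k' →
        ChainMid k' j → ChainMid k j

  /-- The gap condition between consecutive elements of a chain:
  adjacent positions or a chain. -/
  inductive ChainGap : ℕ → ℕ → Prop where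
    | adj (k : ℕ) : ChainGap k (k + 1)
    | chain {k k' : ℕ} : Chain k k' → ChainGap k k'

  /-- The chain relation `i ⤳ j`: there are positions `i = k_1 < ... < k_m = j` with
  `L k_1 ⋖ L k_2 ≐ ... ≐ L k_{m-1} ⋗ L k_m` such that consecutive `k`'s are adjacent
  or themselves related by `⤳`. -/
  inductive Chain : ℕ → ℕ → Prop where
    | mk {i k j : ℕ} : M.rel (L i) (L k) = some .lt → ChainGap i k → ChainMid k j →
        Chain i j
end

end ChainRel

/-- `(Σ,M)^+`: the set of nonempty words compatible with `M`, i.e. `0 ⤳ |w|+1` in `#w#`. -/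
def OPWords (M : OPM A) : Set (List A) :=
  {w | w ≠ [] ∧ Chain M (letterAt w) 0 (w.length + 1)}

/-- An (unweighted) operator precedence automaton over the alphabet `A`. -/
structure OPA (A : Type) where
  Q : Type
  fin : Fintype Q
  I : Set Q
  F : Set Q
  δpush : Set (Q × A × Q)
  δshift : Set (Q × A × Q)
  δpop : Set (Q × Q × Q)

/-- A weighted operator precedence automaton over the alphabet `A` and weights in `K`. -/
structure WOPA (A K : Type) extends OPA A where
  wtpush : Q × A × Q → K
  wtshift : Q × A × Q → K
  wtpop : Q × Q × Q → K

/-- A configuration: a stack of (symbol, state) pairs, a current state,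
and the remaining input. -/
structure Config (A Q : Type) where
  stack : List (A × Q)
  state : Q
  input : List A

/-- The moves (transitions) an OPA may take. -/
inductive Move (A Q : Type) where
  | push (q : Q) (b : A) (r : Q)
  | shift (q : Q) (b : A) (r : Q)
  | pop (q p r : Q)

/-- The topmost stack symbol (`none` = `#` for the empty stack). -/
def topSym {Q : Type} (st : List (A × Q)) : Option A := st.head?.map Prod.fst

/-- One step of an OPA on an OP alphabet `(A, M)`. -/
inductive Exec (M : OPM A) (T : OPA A) : Config A T.Q → Move A T.Q → Config A T.Q → Prop where
  | push {st : List (A × T.Q)} {q r : T.Q} {b : A} {x : List A} :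
      M.rel (topSym st) (some b) = some .lt → (q, b, r) ∈ T.δpush →
      Exec M T ⟨st, q, b :: x⟩ (.push q b r) ⟨(b, q) :: st, r, x⟩
  | shift {st : List (A × T.Q)} {p q r : T.Q} {a b : A} {x : List A} :
      M.rel (some a) (some b) = some .eq → (q, b, r) ∈ T.δshift →
      Exec M T ⟨(a, p) :: st, q, b :: x⟩ (.shift q b r) ⟨(b, p) :: st, r, x⟩
  | pop {st : List (A × T.Q)} {p q r : T.Q} {a : A} {x : List A} :
      M.rel (some a) x.head? = some .gt → (q, p, r) ∈ T.δpop →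
      Exec M T ⟨(a, p) :: st, q, x⟩ (.pop q p r) ⟨st, r, x⟩

/-- Execution of a sequence of moves. -/
inductive ExecList (M : OPM A) (T : OPA A) :
    Config A T.Q → List (Move A T.Q) → Config A T.Q → Prop where
  | nil (c : Config A T.Q) : ExecList M T c [] c
  | cons {c c' c'' : Config A T.Q} {m : Move A T.Q} {ms : List (Move A T.Q)} :
      Exec M T c m c' → ExecList M T c' ms c'' → ExecList M T c (m :: ms) c''

/-- The weight of a move of a weighted OPA. -/
def moveWt [Semiring K] (W : WOPA A K) : Move A W.Q → K
  | .push q b r => W.wtpush (q, b, r)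
  | .shift q b r => W.wtshift (q, b, r)
  | .pop q p r => W.wtpop (q, p, r)

/-- The accepting runs of an OPA on `w`: an initial state, a sequence of moves from the
initial configuration (empty stack, whole input) to a final configuration
(empty stack, input read), and the final state reached. -/
def AccRuns (M : OPM A) (T : OPA A) (w : List A) : Set (T.Q × List (Move A T.Q) × T.Q) :=
  {ρ | ρ.1 ∈ T.I ∧ ρ.2.2 ∈ T.F ∧ ExecList M T ⟨[], ρ.1, w⟩ ρ.2.1 ⟨[], ρ.2.2, []⟩}

/-- The behavior `⟦W⟧(w)`: the sum over all accepting runs of `W` on `w` of the product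
(in order) of the weights of the moves of the run. -/
noncomputable def behavior [Semiring K] (M : OPM A) (W : WOPA A K) (w : List A) : K :=
  ∑ᶠ ρ ∈ AccRuns M W.toOPA w, (ρ.2.1.map (moveWt W)).prod

/-- A weighted OPA is restricted (an rwOPA) if all pop weights are `1`. -/
def Restricted [Semiring K] (W : WOPA A K) : Prop := ∀ t ∈ W.δpop, W.wtpop t = 1

/-- A series `S : (Σ,M)^+ → K` is regular if it is the behavior of some wOPA. -/
def Regular [Semiring K] (M : OPM A) (S : List A → K) : Prop :=
  ∃ W : WOPA A K, ∀ w ∈ OPWords M, S w = behavior M W w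

/-- A series is strictly regular if it is the behavior of some restricted wOPA. -/
def StrictlyRegular [Semiring K] (M : OPM A) (S : List A → K) : Prop :=
  ∃ W : WOPA A K, Restricted W ∧ ∀ w ∈ OPWords M, S w = behavior M W w

/-- Unweighted acceptance. -/
def Accepts (M : OPM A) (T : OPA A) (w : List A) : Prop :=
  ∃ qI ms qF, qI ∈ T.I ∧ qF ∈ T.F ∧ ExecList M T ⟨[], qI, w⟩ ms ⟨[], qF, []⟩

/-- A language `L ⊆ (Σ,M)^+` is an operator precedence language if it is the set of
compatible words accepted by some OPA. -/
def IsOPL (M : OPM A) (L : Set (List A)) : Prop :=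
  ∃ T : OPA A, L = {w | w ∈ OPWords M ∧ Accepts M T w}

/-- The intersection `S ∩ L` of a series with a language. -/
noncomputable def interSeries [Semiring K] (S : List A → K) (L : Set (List A))
    (w : List A) : K :=
  open Classical in if w ∈ L then S w else 0

/-- `h : Σ → Γ` is OPM-preserving: `a ⊙ b` iff `h(a) ⊙ h(b)` for every relation `⊙`. -/
def OPMPreserving (M : OPM A) (M' : OPM B) (h : A → B) : Prop :=
  ∀ a b : A, M.rel (some a) (some b) = M'.rel (some (h a)) (some (h b))

/-- The image series `h(S)(v) = ∑_{w ∈ (Σ,M)^+, h(w) = v} S(w)`. -/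
noncomputable def mapSeries [Semiring K] (M : OPM A) (h : A → B) (S : List A → K)
    (v : List B) : K :=
  ∑ᶠ w ∈ {w | w ∈ OPWords M ∧ w.map h = v}, S w

/-- The pullback OPM `h⁻¹(M)` along `h : Σ' → Σ`. -/
def pullOPM (M : OPM A) (h : B → A) : OPM B where
  rel o₁ o₂ := M.rel (o₁.map h) (o₂.map h)
  hash_lt b := M.hash_lt (h b)
  hash_gt b := M.hash_gt (h b)

/-- The Nivat class `N(Σ,M,K)`: series obtained from a one-state restricted wOPA over a
pulled-back OP alphabet, intersected with an OPL, followed by the projection. -/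
def NivatClass [Semiring K] (M : OPM A) (S : List A → K) : Prop :=
  ∃ (B : Type) (_ : Fintype B) (h : B → A) (W : WOPA B K) (L : Set (List B)),
    Restricted W ∧ (∃ q₀ : W.Q, ∀ q : W.Q, q = q₀) ∧ IsOPL (pullOPM M h) L ∧
    ∀ v ∈ OPWords M,
      S v = mapSeries (pullOPM M h) h (interSeries (behavior (pullOPM M h) W) L) v

/-- An OPL step function: a finite sum `∑ kᵢ · 1_{Lᵢ}` with the `Lᵢ` OPLs forming a
partition of `(Σ,M)^+`. -/
def IsOPLStep [Semiring K] (M : OPM A) (S : List A → K) : Prop :=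
  ∃ (n : ℕ) (k : Fin n → K) (L : Fin n → Set (List A)),
    (∀ i, IsOPL M (L i)) ∧ (∀ i j, i ≠ j → Disjoint (L i) (L j)) ∧
    (⋃ i, L i) = OPWords M ∧ ∀ i, ∀ w ∈ L i, S w = k i



/-- The subsemiring of finite languages over the two-letter alphabet `Bool`
(`false` plays the role of `a`, `true` the role of `b`). -/
def FinLang : Subsemiring (Language Bool) where
  carrier := {l | (l : Set (List Bool)).Finite}
  zero_mem' := by show Set.Finite _; simpa [Language.zero_def] using Set.finite_empty
  one_mem' := by show Set.Finite _; simpa [Language.one_def] using Set.finite_singleton ([] : List Bool)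
  add_mem' := by
    intro a b ha hb
    show Set.Finite _
    simpa [Language.add_def] using Set.Finite.union ha hb
  mul_mem' := by
    intro a b ha hb
    show Set.Finite _
    simpa [Language.mul_def] using Set.Finite.image2 _ ha hb

/-- The alphabet `Σ = {c, r}`. -/
inductive CR where
  | c | r
deriving DecidableEq

instance instFintypeCR : Fintype CR :=
  ⟨{CR.c, CR.r}, fun x => by cases x <;> simp⟩

/-- The OPM with `c ⋖ c`, `c ≐ r`, the standard `#`-relations, and no other relations. -/
def crOPM : OPM CR where
  rel o₁ o₂ :=
    match o₁, o₂ with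
    | none, none => none
    | none, some _ => some .lt
    | some _, none => some .gt
    | some .c, some .c => some .lt
    | some .c, some .r => some .eq
    | some .r, some _ => none
  hash_lt _ := rfl
  hash_gt a := by cases a <;> rfl

/-- The word `aⁿbaⁿ` over `{a, b}`. -/
def anban (n : ℕ) : List Bool :=
  List.replicate n false ++ true :: List.replicate n false

/-- The series with `S(cⁿr) = {aⁿbaⁿ}` for `n ≥ 1` and `S(w) = ∅` otherwise. -/
def S₁ (w : List CR) : FinLang :=
  if 1 ≤ w.count CR.c ∧ w = List.replicate (w.count CR.c) CR.c ++ [CR.r] then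
    ⟨({anban (w.count CR.c)} : Language Bool), Set.finite_singleton _⟩
  else 0

/-!
The automaton for `S₁` reads `cⁿr` by `n` pushes emitting `a`, a shift emitting `b` and `n` pops
each emitting `a`.

The precedence matrix forces every run on `cⁿr` into `n` pushes, one shift and `n` pops. With
trivial pop weights the output is produced by the pushes and the shift alone, while the existence
of the run couples the state `q k` before the `k`-th push with the state `p k` after the matching
pop. A repeated pair `(q i, p i) = (q j, p j)` with `i < j` lets one repeat the pushes
`i, …, j - 1` together with their pops, so a run with output `P V B = aⁿbaⁿ` yields a run on
`cⁿ⁺ᵈr` (`d = j - i`) with output `P V V B`, which is never `aⁿ⁺ᵈbaⁿ⁺ᵈ`.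
-/

open Function

section Languages

variable {α ι : Type} {S : Subsemiring (Language α)}

theorem exists_mem_of_mem_finsum_mem {f : ι → S} {s : Set ι} {x : List α}
    (hx : x ∈ ((∑ᶠ i ∈ s, f i : S) : Language α)) : ∃ i ∈ s, x ∈ (f i : Language α) :=
  finsum_mem_induction (fun L : S => ∀ x ∈ (L : Language α), ∃ i ∈ s, x ∈ (f i : Language α))
    (fun x hx => absurd hx (Language.notMem_zero x))
    (fun _ _ hL hL' x hx => ((Language.mem_add _ _ x).1 hx).elim (hL x) (hL' x))
    (fun i hi _ hx => ⟨i, hi, hx⟩) x hx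

theorem mem_finsum_mem_of_ne_zero {f : ι → S} {s : Set ι} (h : ∑ᶠ i ∈ s, f i ≠ 0) {i : ι}
    (hi : i ∈ s) {x : List α} (hx : x ∈ (f i : Language α)) :
    x ∈ ((∑ᶠ i ∈ s, f i : S) : Language α) := by
  have hfin : (s ∩ support f).Finite := by
    by_contra hinf
    exact h (finsum_mem_eq_zero_of_infinite hinf)
  rw [← finsum_mem_add_sdiff' (Set.singleton_subset_iff.2 hi) hfin, finsum_mem_singleton]
  exact (Language.mem_add _ _ x).2 (Or.inl hx)

theorem mem_prod_map_range {L : ℕ → Language α} {n : ℕ} {x : List α} :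
    x ∈ ((List.range n).map L).prod ↔
      ∃ u : ℕ → List α, (∀ k < n, u k ∈ L k) ∧ x = ((List.range n).map u).flatten := by
  induction n generalizing L x with
  | zero => simp [Language.mem_one]
  | succ n ih =>
    simp only [List.range_succ_eq_map, List.map_cons, List.map_map, List.prod_cons,
      Language.mem_mul, ih, List.flatten_cons]
    constructor
    · rintro ⟨y, hy, _, ⟨u, hu, rfl⟩, rfl⟩
      refine ⟨fun k => if k = 0 then y else u (k - 1), fun k hk => ?_, by simp [comp_def]⟩
      rcases k with _ | k
      · simpa using hy
      · simpa using hu k (by omega)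
    · rintro ⟨u, hu, rfl⟩
      exact ⟨u 0, hu 0 (by omega), _, ⟨u ∘ Nat.succ, fun k hk => hu _ (by omega), rfl⟩, rfl⟩

end Languages

def singletonLang (u : List Bool) : FinLang := ⟨{u}, Set.finite_singleton u⟩

theorem singletonLang_ne_zero (u : List Bool) : singletonLang u ≠ 0 := by
  intro h
  have hu : u ∈ (singletonLang u : Language Bool) := rfl
  rw [h] at hu
  exact Language.notMem_zero u hu

theorem prod_map_singletonLang (l : List (List Bool)) :
    (l.map singletonLang).prod = singletonLang l.flatten := by
  induction l with
  | nil => rfl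
  | cons u l ih =>
    rw [List.map_cons, List.prod_cons, ih]
    refine Subtype.ext (Language.ext fun x => ?_)
    change x ∈ ({u} : Language Bool) * {l.flatten} ↔ x = u ++ l.flatten
    rw [Language.mem_mul]
    constructor
    · rintro ⟨_, rfl, _, rfl, rfl⟩
      rfl
    · rintro rfl
      exact ⟨u, rfl, l.flatten, rfl, rfl⟩

theorem ExecList.append {M : OPM A} {T : OPA A} {c c' c'' : Config A T.Q}
    {ms ms' : List (Move A T.Q)} (h : ExecList M T c ms c') (h' : ExecList M T c' ms' c'') :
    ExecList M T c (ms ++ ms') c'' := by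
  induction h with
  | nil => exact h'
  | cons hm _ ih => exact .cons hm (ih h')

section Pops

variable {M : OPM A} {T : OPA A} {s f : T.Q} {ms : List (Move A T.Q)}

theorem execList_nil_iff : ExecList M T ⟨[], s, []⟩ ms ⟨[], f, []⟩ ↔ ms = [] ∧ s = f := by
  constructor
  · intro h
    cases h with
    | nil => exact ⟨rfl, rfl⟩
    | cons hm _ => cases hm
  · rintro ⟨rfl, rfl⟩
    exact .nil _

theorem execList_pop_iff {a : A} {p : T.Q} {st : List (A × T.Q)} :
    ExecList M T ⟨(a, p) :: st, s, []⟩ ms ⟨[], f, []⟩ ↔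
      ∃ s' ms', (s, p, s') ∈ T.δpop ∧ ms = .pop s p s' :: ms' ∧
        ExecList M T ⟨st, s', []⟩ ms' ⟨[], f, []⟩ := by
  constructor
  · intro h
    cases h with
    | cons hm h' =>
      cases hm with
      | pop _ hδ => exact ⟨_, _, hδ, rfl, h'⟩
  · rintro ⟨s', ms', hδ, rfl, h'⟩
    exact .cons (.pop (M.hash_gt a) hδ) h'

/-- Pops of the entries pushed in states `q (n - 1), …, q 0` (top first), passing through the
states `p n, …, p 0`. -/
def popMoves {Q : Type} (q p : ℕ → Q) (n : ℕ) : List (Move A Q) :=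
  ((List.range n).map fun k => .pop (p (k + 1)) (q k) (p k)).reverse

theorem popMoves_succ {Q : Type} (q p : ℕ → Q) (n : ℕ) :
    (popMoves q p (n + 1) : List (Move A Q)) = .pop (p (n + 1)) (q n) (p n) :: popMoves q p n := by
  simp [popMoves, List.range_succ]

theorem popMoves_update {Q : Type} (q p : ℕ → Q) {n m : ℕ} (hm : n < m) (v : Q) :
    (popMoves q (update p m v) n : List (Move A Q)) = popMoves q p n := by
  unfold popMoves
  congr 1
  refine List.map_congr_left fun k hk => ?_
  rw [List.mem_range] at hk
  rw [update_of_ne (by omega), update_of_ne (by omega)]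

theorem execList_pops_iff {q : ℕ → T.Q} {n : ℕ} {st : List (A × T.Q)}
    (hst : st.map Prod.snd = ((List.range n).map q).reverse) :
    ExecList M T ⟨st, s, []⟩ ms ⟨[], f, []⟩ ↔
      ∃ p, p n = s ∧ p 0 = f ∧ (∀ k < n, (p (k + 1), q k, p k) ∈ T.δpop) ∧
        ms = popMoves q p n := by
  induction n generalizing st s ms with
  | zero =>
    obtain rfl : st = [] := by simpa using hst
    rw [execList_nil_iff]
    constructor
    · rintro ⟨rfl, rfl⟩
      exact ⟨fun _ => s, rfl, rfl, by simp, rfl⟩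
    · rintro ⟨p, rfl, rfl, -, rfl⟩
      exact ⟨rfl, rfl⟩
  | succ n ih =>
    rw [List.range_succ, List.map_append, List.reverse_append] at hst
    rcases st with _ | ⟨⟨a, x⟩, st⟩
    · simp at hst
    simp only [List.map_cons, List.map_nil, List.reverse_singleton, List.singleton_append,
      List.cons.injEq] at hst
    obtain ⟨rfl, hst'⟩ := hst
    rw [execList_pop_iff]
    constructor
    · rintro ⟨s', ms', hδ, rfl, h'⟩
      obtain ⟨p, rfl, hp0, hpop, rfl⟩ := (ih hst').1 h'
      refine ⟨update p (n + 1) s, by simp, by simp [hp0], fun k hk => ?_, ?_⟩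
      · rcases Nat.lt_succ_iff_lt_or_eq.1 hk with hk | rfl
        · rw [update_of_ne (by omega), update_of_ne (by omega)]
          exact hpop k hk
        · simpa [update_of_ne] using hδ
      · rw [popMoves_succ, popMoves_update _ _ (by omega)]
        simp [update_of_ne]
    · rintro ⟨p, rfl, rfl, hpop, rfl⟩
      exact ⟨p n, popMoves q p n, hpop n (by omega), popMoves_succ q p n,
        (ih hst').2 ⟨p, rfl, rfl, fun k hk => hpop k (by omega), rfl⟩⟩

end Pops

def cword (n : ℕ) : List CR := List.replicate n CR.c ++ [CR.r]

section Runs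

variable {T : OPA CR} {s f : T.Q} {ms : List (Move CR T.Q)}

def pushMoves {Q : Type} (q : ℕ → Q) (n : ℕ) : List (Move CR Q) :=
  (List.range n).map fun k => .push (q k) .c (q (k + 1))

def pushStack {Q : Type} (q : ℕ → Q) (n : ℕ) : List (CR × Q) :=
  ((List.range n).map fun k => (.c, q k)).reverse

theorem pushMoves_succ {Q : Type} (q : ℕ → Q) (n : ℕ) :
    pushMoves q (n + 1) = pushMoves q n ++ [.push (q n) .c (q (n + 1))] := by
  simp [pushMoves, List.range_succ]

theorem pushMoves_update {Q : Type} (q : ℕ → Q) {n m : ℕ} (hm : n < m) (v : Q) :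
    pushMoves (update q m v) n = pushMoves q n := by
  refine List.map_congr_left fun k hk => ?_
  rw [List.mem_range] at hk
  rw [update_of_ne (by omega), update_of_ne (by omega)]

theorem pushStack_succ {Q : Type} (q : ℕ → Q) (n : ℕ) :
    pushStack q (n + 1) = (.c, q n) :: pushStack q n := by
  simp [pushStack, List.range_succ]

theorem pushStack_update {Q : Type} (q : ℕ → Q) {n m : ℕ} (hm : n ≤ m) (v : Q) :
    pushStack (update q m v) n = pushStack q n := by
  unfold pushStack
  congr 1
  refine List.map_congr_left fun k hk => ?_
  rw [List.mem_range] at hk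
  rw [update_of_ne (by omega)]

theorem map_snd_pushStack {Q : Type} (q : ℕ → Q) (n : ℕ) :
    (pushStack q n).map Prod.snd = ((List.range n).map q).reverse := by
  simp [pushStack, comp_def]

theorem rel_topSym_pushStack {Q : Type} (q : ℕ → Q) (n : ℕ) :
    crOPM.rel (topSym (pushStack q n)) (some .c) = some .lt := by
  cases n with
  | zero => rfl
  | succ n => rw [pushStack_succ]; rfl

theorem execList_push_iff {st : List (CR × T.Q)} {x : List CR}
    (htop : crOPM.rel (topSym st) (some .c) = some .lt) :
    ExecList crOPM T ⟨st, s, .c :: x⟩ ms ⟨[], f, []⟩ ↔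
      ∃ s' ms', (s, .c, s') ∈ T.δpush ∧ ms = .push s .c s' :: ms' ∧
        ExecList crOPM T ⟨(.c, s) :: st, s', x⟩ ms' ⟨[], f, []⟩ := by
  constructor
  · intro h
    cases h with
    | cons hm h' =>
      cases hm with
      | push _ hδ => exact ⟨_, _, hδ, rfl, h'⟩
      | @shift _ _ _ _ a _ _ hrel => cases a <;> cases hrel
      | @pop _ _ _ _ a _ hrel => cases a <;> cases hrel
  · rintro ⟨s', ms', hδ, rfl, h'⟩
    exact .cons (.push htop hδ) h'

theorem execList_shift_iff {p : T.Q} {st : List (CR × T.Q)} {x : List CR} :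
    ExecList crOPM T ⟨(.c, p) :: st, s, .r :: x⟩ ms ⟨[], f, []⟩ ↔
      ∃ s' ms', (s, .r, s') ∈ T.δshift ∧ ms = .shift s .r s' :: ms' ∧
        ExecList crOPM T ⟨(.r, p) :: st, s', x⟩ ms' ⟨[], f, []⟩ := by
  constructor
  · intro h
    cases h with
    | cons hm h' =>
      cases hm with
      | push hrel => cases hrel
      | shift _ hδ => exact ⟨_, _, hδ, rfl, h'⟩
      | pop hrel => cases hrel
  · rintro ⟨s', ms', hδ, rfl, h'⟩
    exact .cons (.shift rfl hδ) h'

theorem execList_pushMoves {q : ℕ → T.Q} {n : ℕ}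
    (hpush : ∀ k < n, (q k, .c, q (k + 1)) ∈ T.δpush) (x : List CR) :
    ExecList crOPM T ⟨[], q 0, List.replicate n .c ++ x⟩ (pushMoves q n)
      ⟨pushStack q n, q n, x⟩ := by
  induction n generalizing x with
  | zero => exact .nil _
  | succ n ih =>
    rw [List.replicate_succ', List.append_assoc, pushMoves_succ, pushStack_succ]
    exact (ih (fun k hk => hpush k (by omega)) _).append
      (.cons (.push (rel_topSym_pushStack q n) (hpush n (by omega))) (.nil _))

theorem exists_pushMoves_of_execList {n : ℕ} {x : List CR}
    (h : ExecList crOPM T ⟨[], s, List.replicate n .c ++ x⟩ ms ⟨[], f, []⟩) :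
    ∃ q : ℕ → T.Q, q 0 = s ∧ (∀ k < n, (q k, .c, q (k + 1)) ∈ T.δpush) ∧
      ∃ ms', ms = pushMoves q n ++ ms' ∧
        ExecList crOPM T ⟨pushStack q n, q n, x⟩ ms' ⟨[], f, []⟩ := by
  induction n generalizing x with
  | zero => exact ⟨fun _ => s, rfl, by simp, ms, rfl, h⟩
  | succ n ih =>
    rw [List.replicate_succ', List.append_assoc] at h
    obtain ⟨q, hq0, hpush, ms', rfl, h'⟩ := ih h
    obtain ⟨s', ms'', hδ, rfl, h''⟩ := (execList_push_iff (rel_topSym_pushStack q n)).1 h'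
    refine ⟨update q (n + 1) s', by simp [hq0], fun k hk => ?_, ms'', ?_, ?_⟩
    · rcases Nat.lt_succ_iff_lt_or_eq.1 hk with hk | rfl
      · rw [update_of_ne (by omega), update_of_ne (by omega)]
        exact hpush k hk
      · simpa [update_of_ne] using hδ
    · rw [pushMoves_succ, pushMoves_update _ (by omega)]
      simp [update_of_ne]
    · rw [pushStack_succ, pushStack_update _ (by omega)]
      simpa [update_of_ne] using h''

/-- The shape of a run on `cⁿr`: `q k` is the state before the `k`-th push (so `q n` is the
state before the shift) and `p k` the state after popping the symbol pushed in state `q k`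
(so `p n` is the state after the shift and `p 0` the final state). -/
def IsSkeleton (T : OPA CR) (n : ℕ) (q p : ℕ → T.Q) : Prop :=
  (∀ k < n, (q k, .c, q (k + 1)) ∈ T.δpush ∧ (p (k + 1), q k, p k) ∈ T.δpop) ∧
    (q n, .r, p n) ∈ T.δshift

def skeletonMoves {Q : Type} (q p : ℕ → Q) (n : ℕ) : List (Move CR Q) :=
  pushMoves q n ++ .shift (q n) .r (p n) :: popMoves q p n

theorem execList_cword_iff {n : ℕ} (hn : 1 ≤ n) :
    ExecList crOPM T ⟨[], s, cword n⟩ ms ⟨[], f, []⟩ ↔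
      ∃ q p, IsSkeleton T n q p ∧ q 0 = s ∧ p 0 = f ∧ ms = skeletonMoves q p n := by
  obtain ⟨m, rfl⟩ : ∃ m, n = m + 1 := ⟨n - 1, by omega⟩
  have hst : ∀ q : ℕ → T.Q,
      ((CR.r, q m) :: pushStack q m).map Prod.snd = ((List.range (m + 1)).map q).reverse :=
    fun q => by simpa [pushStack_succ] using map_snd_pushStack q (m + 1)
  constructor
  · intro h
    obtain ⟨q, rfl, hpush, ms', rfl, h'⟩ := exists_pushMoves_of_execList h
    rw [pushStack_succ] at h'
    obtain ⟨s', ms'', hshift, rfl, h''⟩ := execList_shift_iff.1 h'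
    obtain ⟨p, rfl, rfl, hpop, rfl⟩ := (execList_pops_iff (hst q)).1 h''
    exact ⟨q, p, ⟨fun k hk => ⟨hpush k hk, hpop k hk⟩, hshift⟩, rfl, rfl, rfl⟩
  · rintro ⟨q, p, ⟨hstep, hshift⟩, rfl, rfl, rfl⟩
    refine (execList_pushMoves (fun k hk => (hstep k hk).1) [.r]).append ?_
    rw [pushStack_succ]
    exact execList_shift_iff.2 ⟨_, _, hshift, rfl,
      (execList_pops_iff (hst q)).2 ⟨p, rfl, rfl, fun k hk => (hstep k hk).2, rfl⟩⟩

end Runs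

section Cword

theorem count_c_cword (n : ℕ) : (cword n).count CR.c = n := by
  simp [cword]

theorem S₁_cword {n : ℕ} (hn : 1 ≤ n) : S₁ (cword n) = singletonLang (anban n) := by
  simp only [S₁, count_c_cword]
  rw [if_pos ⟨hn, rfl⟩]
  rfl

theorem letterAt_cword_of_le {n k : ℕ} (h1 : 1 ≤ k) (h2 : k ≤ n) :
    letterAt (cword n) k = some CR.c := by
  rw [letterAt, if_neg (by omega), cword, List.getElem?_append_left (by simp; omega),
    List.getElem?_replicate, if_pos (by omega)]

theorem letterAt_cword_succ (n : ℕ) : letterAt (cword n) (n + 1) = some CR.r := by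
  simp [letterAt, cword]

theorem letterAt_cword_add_two (n : ℕ) : letterAt (cword n) (n + 2) = none := by
  simp [letterAt, cword]

theorem cword_mem_OPWords {n : ℕ} (hn : 1 ≤ n) : cword n ∈ OPWords crOPM := by
  refine ⟨by simp [cword], ?_⟩
  have hmid : ∀ t k, 1 ≤ k → k + t = n → ChainMid crOPM (letterAt (cword n)) k (n + 2) := by
    intro t
    induction t with
    | zero =>
      intro k hk hkn
      obtain rfl : k = n := hkn
      refine .step ?_ (.adj k) (.last ?_ (.adj (k + 1)))
      · rw [letterAt_cword_of_le hk le_rfl, letterAt_cword_succ]; rfl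
      · rw [letterAt_cword_succ, letterAt_cword_add_two]; rfl
    | succ t ih =>
      intro k hk hkn
      refine .last ?_ (.chain (.mk ?_ (.adj k) (ih (k + 1) (by omega) (by omega))))
      · rw [letterAt_cword_of_le hk (by omega), letterAt_cword_add_two]; rfl
      · rw [letterAt_cword_of_le hk (by omega), letterAt_cword_of_le (by omega) (by omega)]; rfl
  rw [show (cword n).length + 1 = n + 2 by simp [cword]]
  refine .mk ?_ (.adj 0) (hmid (n - 1) 1 le_rfl (by omega))
  rw [zero_add, letterAt_cword_of_le le_rfl hn]
  rfl

end Cword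

section Regular

abbrev W₁ : WOPA CR FinLang where
  Q := Bool
  fin := inferInstance
  I := {false}
  F := {true}
  δpush := {(false, .c, false)}
  δshift := {(false, .r, true)}
  δpop := {(true, false, true)}
  wtpush _ := singletonLang [false]
  wtshift _ := singletonLang [true]
  wtpop _ := singletonLang [false]

def runW₁ (n : ℕ) : List (Move CR Bool) :=
  List.replicate n (.push false .c false) ++
    .shift false .r true :: List.replicate n (.pop true false true)

theorem execList_W₁_of_true {st : List (CR × Bool)} {x : List CR} {ms : List (Move CR Bool)}
    (h : ExecList crOPM W₁.toOPA ⟨st, true, x⟩ ms ⟨[], true, []⟩) (hst : ∀ e ∈ st, e.2 = false) :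
    x = [] ∧ ms = List.replicate st.length (.pop true false true) := by
  induction ms generalizing st with
  | nil =>
    cases h
    exact ⟨rfl, rfl⟩
  | cons m ms ih =>
    cases h with
    | cons hm h' =>
      cases hm with
      | push _ hδ => cases hδ
      | shift _ hδ => cases hδ
      | pop _ hδ =>
        cases hδ
        obtain ⟨rfl, rfl⟩ := ih h' fun e he => hst e (.tail _ he)
        exact ⟨rfl, rfl⟩

theorem execList_W₁_of_false {st : List (CR × Bool)} {w : List CR} {ms : List (Move CR Bool)}
    (h : ExecList crOPM W₁.toOPA ⟨st, false, w⟩ ms ⟨[], true, []⟩)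
    (hst : ∀ e ∈ st, e = (.c, false)) :
    ∃ k, 1 ≤ k + st.length ∧ w = cword k ∧
      ms = List.replicate k (.push false .c false) ++
        .shift false .r true :: List.replicate (k + st.length) (.pop true false true) := by
  induction ms generalizing st w with
  | nil => cases h
  | cons m ms ih =>
    cases h with
    | cons hm h' =>
      cases hm with
      | push _ hδ =>
        cases hδ
        obtain ⟨k, hk, rfl, rfl⟩ := ih h' fun e he =>
          (List.mem_cons.1 he).elim id (hst e)
        refine ⟨k + 1, by omega, by simp [cword, List.replicate_succ], ?_⟩
        rw [List.length_cons, show k + (st.length + 1) = k + 1 + st.length by omega]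
        rfl
      | @shift st p _ _ a _ x _ hδ =>
        cases hδ
        obtain ⟨rfl, rfl⟩ := hst _ List.mem_cons_self
        obtain ⟨rfl, rfl⟩ := execList_W₁_of_true h' fun e he =>
          (List.mem_cons.1 he).elim (fun h => h ▸ rfl) fun he => by rw [hst e (.tail _ he)]
        exact ⟨0, by simp, rfl, by simp⟩
      | pop _ hδ => cases hδ

theorem cword_injective : Injective cword := fun m n h => by
  simpa [cword] using congrArg List.length h

theorem accRuns_W₁_cword {n : ℕ} (hn : 1 ≤ n) :
    AccRuns crOPM W₁.toOPA (cword n) = {(false, runW₁ n, true)} := by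
  refine Set.eq_singleton_iff_unique_mem.2 ⟨⟨rfl, rfl, ?_⟩, ?_⟩
  · refine (execList_cword_iff hn).2 ⟨fun _ => false, fun _ => true,
      ⟨fun _ _ => ⟨rfl, rfl⟩, rfl⟩, rfl, rfl, ?_⟩
    simp [runW₁, skeletonMoves, pushMoves, popMoves]
  · rintro ⟨_, ms, _⟩ ⟨rfl, rfl, h⟩
    obtain ⟨k, -, hk, rfl⟩ := execList_W₁_of_false h (by simp)
    obtain rfl := cword_injective hk
    simp [runW₁]

theorem accRuns_W₁_eq_empty {w : List CR} (hw : ∀ n, 1 ≤ n → w ≠ cword n) :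
    AccRuns crOPM W₁.toOPA w = ∅ := by
  refine Set.eq_empty_of_forall_notMem ?_
  rintro ⟨_, ms, _⟩ ⟨rfl, rfl, h⟩
  obtain ⟨k, hk, rfl, -⟩ := execList_W₁_of_false h (by simp)
  exact hw k (by simpa using hk) rfl

theorem behavior_W₁_cword {n : ℕ} (hn : 1 ≤ n) :
    behavior crOPM W₁ (cword n) = singletonLang (anban n) := by
  rw [behavior, accRuns_W₁_cword hn, finsum_mem_singleton]
  have hwt : (runW₁ n).map (moveWt W₁) =
      (List.replicate n [false] ++ [true] :: List.replicate n [false]).map singletonLang := by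
    simp [runW₁, moveWt]
  rw [hwt, prod_map_singletonLang]
  simp [anban, List.flatten_replicate_singleton]

theorem regular_S₁ : Regular crOPM S₁ := by
  refine ⟨W₁, fun w _ => ?_⟩
  by_cases hw : ∃ n, 1 ≤ n ∧ w = cword n
  · obtain ⟨n, hn, rfl⟩ := hw
    rw [S₁_cword hn, behavior_W₁_cword hn]
  · rw [behavior, accRuns_W₁_eq_empty fun n hn h => hw ⟨n, hn, h⟩, finsum_mem_empty, S₁, if_neg]
    rintro ⟨h1, h2⟩
    exact hw ⟨_, h1, h2⟩

end Regular

section Pumping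

theorem range'_append_range' {a b c : ℕ} (hab : a ≤ b) (hbc : b ≤ c) :
    List.range' a (b - a) ++ List.range' b (c - b) = List.range' a (c - a) := by
  have h := @List.range'_append_1 a (b - a) (c - b)
  rwa [show a + (b - a) = b by omega, show b - a + (c - b) = c - a by omega] at h

/-- The reindexing `0, …, j - 1, i, i + 1, …`, which repeats the segment `[i, j)` once. -/
def pumpIdx (i j k : ℕ) : ℕ := if k < j then k else k - (j - i)

theorem pumpIdx_zero {i j : ℕ} (hij : i < j) : pumpIdx i j 0 = 0 := by
  simp [pumpIdx, show 0 < j by omega]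

theorem pumpIdx_add {i j n : ℕ} (hjn : j ≤ n) : pumpIdx i j (n + (j - i)) = n := by
  simp only [pumpIdx]
  rw [if_neg (by omega)]
  omega

theorem pumpIdx_step {E : ℕ → ℕ → Prop} {i j n : ℕ} (hij : i < j) (hjn : j ≤ n)
    (hE : ∀ k < n, E k (k + 1)) (hback : E (j - 1) i) :
    ∀ k < n + (j - i), E (pumpIdx i j k) (pumpIdx i j (k + 1)) := by
  intro k hk
  unfold pumpIdx
  split_ifs with h₁ h₂ h₂
  · exact hE k (by omega)
  · rwa [show k = j - 1 by omega, show j - 1 + 1 - (j - i) = i by omega]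
  · omega
  · rw [show k + 1 - (j - i) = k - (j - i) + 1 by omega]
    exact hE _ (by omega)

theorem map_pumpIdx_range {i j n : ℕ} (hij : i ≤ j) (hjn : j ≤ n) :
    (List.range (n + (j - i))).map (pumpIdx i j) = List.range' 0 j ++ List.range' i (n - i) := by
  rw [List.range_eq_range', show n + (j - i) = j + (n - i) by omega, ← List.range'_append_1,
    List.map_append, zero_add]
  congr 1
  · refine (List.map_congr_left fun k hk => ?_).trans (List.map_id _)
    rw [List.mem_range'_1] at hk
    rw [pumpIdx, if_pos (by omega), id]
  · refine List.ext_getElem (by simp) fun k _ _ => ?_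
    simp only [List.getElem_map, List.getElem_range', pumpIdx]
    rw [if_neg (by omega)]
    omega

theorem exists_lt_le_map_eq {β : Type} [Finite β] (f : ℕ → β) {n : ℕ} (hn : Nat.card β < n + 1) :
    ∃ i j, i < j ∧ j ≤ n ∧ f i = f j := by
  by_contra! h
  have hinj : Injective fun k : Fin (n + 1) => f k := by
    intro a b hab
    by_contra hne
    rcases lt_or_gt_of_ne (Fin.val_ne_of_ne hne) with hlt | hlt
    · exact h _ _ hlt (by omega) hab
    · exact h _ _ hlt (by omega) hab.symm
  have := Nat.card_le_card_of_injective _ hinj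
  simp at this
  omega

end Pumping

section NotStrictlyRegular

theorem idxOf_true_anban (n : ℕ) : (anban n).idxOf true = n := by
  rw [anban, List.idxOf_append_of_notMem (by simp)]
  simp

/-- The `b` of `aⁿbaⁿ` sits at position `n`; pumping a `b`-free middle part `V` either leaves
that position unchanged (`b` before `V`) or shifts it by `|V| = 2d` instead of `d`. -/
theorem anban_pump {P V B : List Bool} {n d : ℕ} (hd : 0 < d) (h : P ++ V ++ B = anban n)
    (h' : P ++ V ++ V ++ B = anban (n + d)) : False := by
  have hlen := congrArg List.length h
  have hlen' := congrArg List.length h'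
  have hcount := congrArg (List.count true) h
  have hcount' := congrArg (List.count true) h'
  have hidx := congrArg (List.idxOf true) h
  have hidx' := congrArg (List.idxOf true) h'
  simp only [anban, List.length_append, List.length_replicate, List.length_cons,
    List.count_append, List.count_replicate, List.count_cons] at hlen hlen' hcount hcount'
  rw [idxOf_true_anban] at hidx hidx'
  have hV : true ∉ V := by
    rw [← List.count_eq_zero]
    simp at hcount hcount'
    omega
  by_cases hP : true ∈ P
  · rw [List.append_assoc, List.idxOf_append_of_mem hP] at hidx
    rw [List.append_assoc, List.append_assoc, List.idxOf_append_of_mem hP] at hidx'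
    omega
  · rw [List.idxOf_append_of_notMem (by simp [hP, hV])] at hidx
    rw [List.idxOf_append_of_notMem (by simp [hP, hV])] at hidx'
    simp only [List.length_append] at hidx hidx'
    omega

variable {α : Type} {S : Subsemiring (Language α)}

theorem prod_moveWt_popMoves {K : Type} [Semiring K] {W : WOPA A K} (hW : Restricted W)
    {q p : ℕ → W.Q} {n : ℕ} (hpop : ∀ k < n, (p (k + 1), q k, p k) ∈ W.δpop) :
    ((popMoves q p n).map (moveWt W)).prod = 1 := by
  refine List.prod_eq_one fun x hx => ?_
  simp only [popMoves, List.map_reverse, List.mem_reverse, List.map_map, List.mem_map,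
    List.mem_range] at hx
  obtain ⟨k, hk, rfl⟩ := hx
  exact hW _ (hpop k hk)

/-- Output of an accepting run on `cⁿr` when the pop weights are ignored. -/
def Yields (W : WOPA CR S) (n : ℕ) (x : List α) : Prop :=
  ∃ q p, IsSkeleton W.toOPA n q p ∧ q 0 ∈ W.I ∧ p 0 ∈ W.F ∧
    ∃ u : ℕ → List α, (∀ k < n, u k ∈ (W.wtpush (q k, .c, q (k + 1)) : Language α)) ∧
      ∃ s ∈ (W.wtshift (q n, .r, p n) : Language α), x = ((List.range n).map u).flatten ++ s

theorem mem_prod_moveWt_skeletonMoves_iff {W : WOPA CR S} (hW : Restricted W) {n : ℕ}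
    {q p : ℕ → W.Q} (hsk : IsSkeleton W.toOPA n q p) {x : List α} :
    x ∈ (((skeletonMoves q p n).map (moveWt W)).prod : Language α) ↔
      ∃ u : ℕ → List α, (∀ k < n, u k ∈ (W.wtpush (q k, .c, q (k + 1)) : Language α)) ∧
        ∃ s ∈ (W.wtshift (q n, .r, p n) : Language α), x = ((List.range n).map u).flatten ++ s := by
  rw [skeletonMoves, List.map_append, List.prod_append, List.map_cons, List.prod_cons,
    prod_moveWt_popMoves hW fun k hk => (hsk.1 k hk).2, mul_one, Subsemiring.coe_mul,
    SubmonoidClass.coe_list_prod, Language.mem_mul]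
  simp only [pushMoves, List.map_map, comp_def, moveWt, mem_prod_map_range]
  constructor
  · rintro ⟨_, ⟨u, hu, rfl⟩, s, hs, rfl⟩
    exact ⟨u, hu, s, hs, rfl⟩
  · rintro ⟨u, hu, s, hs, rfl⟩
    exact ⟨_, ⟨u, hu, rfl⟩, s, hs, rfl⟩

theorem mem_behavior_cword_iff {W : WOPA CR S} (hW : Restricted W) {n : ℕ} (hn : 1 ≤ n)
    (h0 : behavior crOPM W (cword n) ≠ 0) {x : List α} :
    x ∈ ((behavior crOPM W (cword n) : S) : Language α) ↔ Yields W n x := by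
  constructor
  · intro hx
    obtain ⟨⟨_, _, _⟩, ⟨hI, hF, h⟩, hx⟩ := exists_mem_of_mem_finsum_mem hx
    obtain ⟨q, p, hsk, rfl, rfl, rfl⟩ := (execList_cword_iff hn).1 h
    exact ⟨q, p, hsk, hI, hF, (mem_prod_moveWt_skeletonMoves_iff hW hsk).1 hx⟩
  · rintro ⟨q, p, hsk, hI, hF, hx⟩
    exact mem_finsum_mem_of_ne_zero h0 (i := (q 0, skeletonMoves q p n, p 0))
      ⟨hI, hF, (execList_cword_iff hn).2 ⟨q, p, hsk, rfl, rfl, rfl⟩⟩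
      ((mem_prod_moveWt_skeletonMoves_iff hW hsk).2 hx)

theorem Yields.pump {W : WOPA CR S} {n : ℕ} {x : List α} (hx : Yields W n x)
    (hn : Nat.card (W.Q × W.Q) < n + 1) :
    ∃ P V B : List α, ∃ d, 0 < d ∧ x = P ++ V ++ B ∧ Yields W (n + d) (P ++ V ++ V ++ B) := by
  have := W.fin
  obtain ⟨q, p, ⟨hstep, hshift⟩, hI, hF, u, hu, s, hs, rfl⟩ := hx
  obtain ⟨i, j, hij, hjn, hqp⟩ := exists_lt_le_map_eq (fun k => (q k, p k)) hn
  obtain ⟨hqij, hpij⟩ := Prod.mk.inj hqp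
  have hstep' := pumpIdx_step (E := fun a b => ((q a, .c, q b) ∈ W.δpush ∧
      (p b, q a, p a) ∈ W.δpop) ∧ u a ∈ (W.wtpush (q a, .c, q b) : Language α))
    hij hjn (fun k hk => ⟨hstep k hk, hu k hk⟩)
    (by simpa only [hqij, hpij, Nat.sub_add_cancel (by omega : 1 ≤ j)] using
      (⟨hstep (j - 1) (by omega), hu (j - 1) (by omega)⟩ : _ ∧ _))
  let flat (a b : ℕ) := ((List.range' a (b - a)).map u).flatten
  have hflat : ∀ {a b c}, a ≤ b → b ≤ c → flat a c = flat a b ++ flat b c := fun hab hbc => by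
    simp only [flat, ← range'_append_range' hab hbc, List.map_append, List.flatten_append]
  refine ⟨flat 0 i, flat i j, flat j n ++ s, j - i, by omega, ?_, ?_⟩
  · calc ((List.range n).map u).flatten ++ s = flat 0 n ++ s := by rw [List.range_eq_range']; rfl
      _ = _ := by
        rw [hflat (Nat.zero_le i) (by omega), hflat hij.le hjn]
        simp only [List.append_assoc]
  · refine ⟨q ∘ pumpIdx i j, p ∘ pumpIdx i j, ⟨fun k hk => (hstep' k hk).1, ?_⟩, ?_, ?_,
      u ∘ pumpIdx i j, fun k hk => (hstep' k hk).2, s, ?_, ?_⟩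
    · simpa [pumpIdx_add hjn] using hshift
    · simpa [pumpIdx_zero hij] using hI
    · simpa [pumpIdx_zero hij] using hF
    · simpa [pumpIdx_add hjn] using hs
    · calc flat 0 i ++ flat i j ++ flat i j ++ (flat j n ++ s) = flat 0 j ++ flat i n ++ s := by
            rw [hflat (Nat.zero_le i) hij.le, hflat hij.le hjn]
            simp only [List.append_assoc]
        _ = _ := by
            rw [← List.map_map, map_pumpIdx_range hij.le hjn, List.map_append,
              List.flatten_append]
            rfl

end NotStrictlyRegular

theorem not_strictlyRegular_S₁ : ¬ StrictlyRegular crOPM S₁ := by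
  rintro ⟨W, hW, hS⟩
  have hyields : ∀ n x, 1 ≤ n → (Yields W n x ↔ x = anban n) := fun n x hn => by
    have hbeh : behavior crOPM W (cword n) = singletonLang (anban n) := by
      rw [← hS _ (cword_mem_OPWords hn), S₁_cword hn]
    rw [← mem_behavior_cword_iff hW hn (hbeh ▸ singletonLang_ne_zero _), hbeh]
    rfl
  set n := Nat.card (W.Q × W.Q) + 1
  obtain ⟨P, V, B, d, hd, hx, hy⟩ := ((hyields n _ (by omega)).2 rfl).pump (by omega)
  exact anban_pump hd hx.symm ((hyields _ _ (by omega)).1 hy)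

/-- The series `S₁` is regular but not strictly regular. -/
theorem regular_not_strictlyRegular :
    Regular crOPM S₁ ∧ ¬ StrictlyRegular crOPM S₁ :=
  ⟨regular_S₁, not_strictlyRegular_S₁⟩

end WOP
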